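/- arXiv:2301.01053 — 6 statements merged into one kernel-verified Lean document; each statement's English description precedes it below -/
import Mathlib

section
/- The function f(x) = x(1 - ln x)^2 is concave on the interval [0,1] (with f(0) := 0). -/
/-!
With `L = log x`, the derivative of `f x = x * (1 - L) ^ 2` is `L ^ 2 - 1` and the second
derivative is `2 * L / x`, which is nonpositive on `(0, 1)`. Continuity at `0` comes from
writing `f x = (√x - 2 * (√x * log √x)) ^ 2` for `x ≥ 0` and the continuity of `y ↦ y * log y`.
-/

open Real Set

lemma mul_one_sub_log_sq_eq_sq {x : ℝ} (hx : 0 ≤ x) :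
    x * (1 - log x) ^ 2 = (√x - 2 * (√x * log √x)) ^ 2 := by
  rw [log_sqrt hx]
  linear_combination (1 - log x) ^ 2 * (sq_sqrt hx).symm

lemma continuousOn_mul_one_sub_log_sq :
    ContinuousOn (fun x : ℝ => x * (1 - log x) ^ 2) (Ici 0) := by
  have hsq : Continuous fun x : ℝ => (√x - 2 * (√x * log √x)) ^ 2 := by
    have := continuous_mul_log.comp continuous_sqrt
    fun_prop
  exact hsq.continuousOn.congr fun x hx => mul_one_sub_log_sq_eq_sq hx

lemma hasDerivAt_mul_one_sub_log_sq {x : ℝ} (hx : x ≠ 0) :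
    HasDerivAt (fun x : ℝ => x * (1 - log x) ^ 2) (log x ^ 2 - 1) x := by
  have h := (hasDerivAt_id' x).fun_mul (((hasDerivAt_log hx).const_sub 1).fun_pow 2)
  exact h.congr_deriv (by field_simp; ring)

lemma hasDerivAt_log_sq_sub_one {x : ℝ} (hx : x ≠ 0) :
    HasDerivAt (fun x : ℝ => log x ^ 2 - 1) (2 * log x / x) x :=
  (((hasDerivAt_log hx).fun_pow 2).sub_const 1).congr_deriv (by field_simp; ring)

/-- The function `f(x) = x (1 - ln x)^2` (with `f 0 = 0`, which holds since
`Real.log 0 = 0`) is concave on the interval `[0,1]`. -/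
theorem concaveOn_x_one_sub_log_sq :
    ConcaveOn ℝ (Set.Icc (0:ℝ) 1) (fun x : ℝ => x * (1 - Real.log x) ^ 2) := by
  refine concaveOn_of_hasDerivWithinAt2_nonpos (f' := fun x => log x ^ 2 - 1)
    (f'' := fun x => 2 * log x / x) (convex_Icc 0 1)
    (continuousOn_mul_one_sub_log_sq.mono Icc_subset_Ici_self) ?_ ?_ ?_
  all_goals rw [interior_Icc]
  · exact fun x hx => (hasDerivAt_mul_one_sub_log_sq hx.1.ne').hasDerivWithinAt
  · exact fun x hx => (hasDerivAt_log_sq_sub_one hx.1.ne').hasDerivWithinAt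
  · exact fun x hx =>
      div_nonpos_of_nonpos_of_nonneg (by linarith [log_nonpos hx.1.le hx.2.le]) hx.1.le
end

section
/- For every natural number n ≥ 1 and every real b ≥ n - 1, the function f_n(x) = x * (b - ln x)^n is concave on the interval [0,1] (with f_n(0) := 0). -/
/-!
On `(0, 1)` put `L = b - log x`, so `L ≥ b ≥ n - 1`. Then `f' = L ^ n - n L ^ (n - 1)` and
`f'' = -(n / x) (L ^ (n - 1) - (n - 1) L ^ (n - 2)) = -(n / x) L ^ (n - 2) (L - (n - 1)) ≤ 0`.
Continuity at `0` comes from `|x| = e ^ b e ^ (-L)` and `L ^ n e ^ (-L) → 0` as `L → ∞`.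
-/

open Filter Topology

theorem pow_sub_mul_pow_pred_nonneg {R : Type*} [CommRing R] [PartialOrder R] [IsOrderedRing R]
    {t : R} {k : ℕ} (hk : (k : R) ≤ t) : 0 ≤ t ^ k - k * t ^ (k - 1) := by
  cases k with
  | zero => simp
  | succ m =>
    have ht : 0 ≤ t := (Nat.cast_nonneg _).trans hk
    calc (0 : R) ≤ t ^ m * (t - (m + 1 : ℕ)) := mul_nonneg (pow_nonneg ht m) (sub_nonneg.2 hk)
      _ = _ := by push_cast; ring

namespace Real

variable (b : ℝ) (n : ℕ)

theorem tendsto_abs_mul_sub_log_pow_nhdsNE_zero :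
    Tendsto (fun x => |x| * (b - log x) ^ n) (𝓝[≠] 0) (𝓝 0) := by
  have hL : Tendsto (fun x => b - log x) (𝓝[≠] 0) atTop :=
    tendsto_atTop_add_const_left _ b (tendsto_neg_atBot_atTop.comp tendsto_log_nhdsNE_zero)
  have := ((tendsto_pow_mul_exp_neg_atTop_nhds_zero n).comp hL).const_mul (exp b)
  rw [mul_zero] at this
  refine this.congr' ?_
  filter_upwards [self_mem_nhdsWithin] with x hx
  rw [Function.comp_apply, neg_sub, exp_sub, exp_log_eq_abs hx]
  field_simp

theorem continuous_mul_sub_log_pow : Continuous fun x => x * (b - log x) ^ n := by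
  refine continuous_iff_continuousAt.2 fun x => ?_
  obtain hx | rfl := ne_or_eq x 0
  · exact continuousAt_id.mul ((continuousAt_const.sub (continuousAt_log hx)).pow n)
  rw [← continuousWithinAt_compl_self, ContinuousWithinAt, zero_mul,
    tendsto_zero_iff_abs_tendsto_zero]
  simpa only [Function.comp_def, abs_mul, abs_abs, abs_zero] using
    (tendsto_abs_mul_sub_log_pow_nhdsNE_zero b n).abs

variable {x : ℝ}

theorem hasDerivAt_mul_sub_log_pow (hx : x ≠ 0) :
    HasDerivAt (fun x => x * (b - log x) ^ n)
      ((b - log x) ^ n - n * (b - log x) ^ (n - 1)) x := by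
  refine ((hasDerivAt_id' x).fun_mul
    (((hasDerivAt_log hx).const_sub b).fun_pow n)).congr_deriv ?_
  field_simp
  ring

theorem hasDerivAt_sub_log_pow_sub_mul_pow_pred (hx : x ≠ 0) :
    HasDerivAt (fun x => (b - log x) ^ n - n * (b - log x) ^ (n - 1))
      (-(n / x) * ((b - log x) ^ (n - 1) - (n - 1 : ℕ) * (b - log x) ^ (n - 1 - 1))) x := by
  have hL := (hasDerivAt_log hx).const_sub b
  refine ((hL.fun_pow n).fun_sub ((hL.fun_pow (n - 1)).const_mul (n : ℝ))).congr_deriv ?_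
  ring

end Real

open Real in
/-- For `n ≥ 1` and `b ≥ n - 1`, the function `f_n(x) = x (b - ln x)^n`
(with `f_n 0 = 0`, which holds since `Real.log 0 = 0`) is concave on `[0,1]`. -/
theorem concaveOn_x_shifted_log_pow (n : ℕ) (hn : 1 ≤ n) (b : ℝ) (hb : (n : ℝ) - 1 ≤ b) :
    ConcaveOn ℝ (Set.Icc (0:ℝ) 1) (fun x : ℝ => x * (b - Real.log x) ^ n) := by
  have hpos : ∀ x ∈ interior (Set.Icc (0 : ℝ) 1), 0 < x := fun x hx => by
    rw [interior_Icc] at hx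
    exact hx.1
  refine concaveOn_of_hasDerivWithinAt2_nonpos (convex_Icc 0 1)
    (continuous_mul_sub_log_pow b n).continuousOn
    (fun x hx => (hasDerivAt_mul_sub_log_pow b n (hpos x hx).ne').hasDerivWithinAt)
    (fun x hx => (hasDerivAt_sub_log_pow_sub_mul_pow_pred b n (hpos x hx).ne').hasDerivWithinAt)
    fun x hx => ?_
  rw [interior_Icc] at hx
  have hL : ((n - 1 : ℕ) : ℝ) ≤ b - log x := by
    rw [Nat.cast_sub hn, Nat.cast_one]
    linarith [log_nonpos hx.1.le hx.2.le]
  exact mul_nonpos_of_nonpos_of_nonneg (neg_nonpos.2 (div_nonneg n.cast_nonneg hx.1.le))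
    (pow_sub_mul_pow_pred_nonneg hL)
end

section
/- A polynomial p with real coefficients that is nonnegative on all of ℝ can be written as a sum of two squares of real polynomials: p = q^2 + r^2. -/
/-!
Induct on the degree of `p ≥ 0`. A real root `a` of `p` is a minimum, hence a root of `p'`
too, so `(X - a)²` divides `p`. If `p` has no real root, a monic irreducible factor of `p` is a
quadratic `X² + bX + c` without real roots, i.e. `(X + b/2)² + d` with `d > 0`. Either way
`p = g * f` with `g` a sum of two squares of positive degree; `f` is again nonnegative, since
`g > 0` off a finite set and `f` is continuous, and the Brahmagupta–Fibonacci identity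
multiplies the two representations.
-/

open Polynomial

def IsSumTwoSq {R : Type*} [Semiring R] (a : R) : Prop :=
  ∃ x y : R, a = x ^ 2 + y ^ 2

theorem isSumTwoSq_sq {R : Type*} [Semiring R] (a : R) : IsSumTwoSq (a ^ 2) :=
  ⟨a, 0, by simp⟩

theorem IsSumTwoSq.mul {R : Type*} [CommRing R] {a b : R} (ha : IsSumTwoSq a)
    (hb : IsSumTwoSq b) : IsSumTwoSq (a * b) :=
  let ⟨_, _, ha⟩ := ha
  let ⟨_, _, hb⟩ := hb
  sq_add_sq_mul ha hb

theorem IsSumTwoSq.eval_nonneg {R : Type*} [CommRing R] [LinearOrder R] [IsStrictOrderedRing R]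
    {p : R[X]} (hp : IsSumTwoSq p) (x : R) : 0 ≤ p.eval x := by
  obtain ⟨q, r, rfl⟩ := hp
  simp only [eval_add, eval_pow]
  positivity

namespace Polynomial

theorem forall_eval_nonneg_of_mul {g f : ℝ[X]} (hg0 : g ≠ 0) (hg : ∀ x, 0 ≤ g.eval x)
    (hgf : ∀ x, 0 ≤ (g * f).eval x) (x : ℝ) : 0 ≤ f.eval x := by
  have hdense : Dense {x : ℝ | g.IsRoot x}ᶜ :=
    (finite_setOfPred_isRoot hg0).countable.dense_compl ℝ
  have hclosed : IsClosed {x | 0 ≤ f.eval x} := isClosed_le continuous_const f.continuous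
  refine hclosed.closure_subset_iff.mpr (fun y hy => ?_) (hdense.closure_eq ▸ Set.mem_univ x)
  exact nonneg_of_mul_nonneg_right ((hgf y).trans_eq eval_mul) ((hg y).lt_of_ne' hy)

theorem sq_X_sub_C_dvd_of_isRoot {p : ℝ[X]} (hp : ∀ x, 0 ≤ p.eval x) {a : ℝ}
    (ha : p.IsRoot a) : (X - C a) ^ 2 ∣ p := by
  rcases eq_or_ne p 0 with rfl | hp0
  · exact dvd_zero _
  have hmin : IsLocalMin (fun x => p.eval x) a :=
    .of_forall fun x => by simpa [ha.eq_zero] using hp x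
  have hderiv : p.derivative.IsRoot a := by simpa using hmin.deriv_eq_zero
  exact (le_rootMultiplicity_iff hp0).mp <|
    (one_lt_rootMultiplicity_iff_isRoot hp0).mpr ⟨ha, hderiv⟩

theorem isSumTwoSq_of_isMonicOfDegree_two {g : ℝ[X]} (hg : IsMonicOfDegree g 2)
    (hroot : ∀ x, ¬ g.IsRoot x) : IsSumTwoSq g := by
  obtain ⟨b, c, rfl⟩ := isMonicOfDegree_two_iff.mp hg
  set d := c - b ^ 2 / 4
  have hd : 0 ≤ d := by
    by_contra! hd
    refine hroot (-b / 2 + √(-d)) ?_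
    have := Real.sq_sqrt (neg_nonneg.mpr hd.le)
    simp only [IsRoot, eval_add, eval_mul, eval_pow, eval_X, eval_C]
    linear_combination this
  refine ⟨X + C (b / 2), C √d, funext fun x => ?_⟩
  simp only [eval_add, eval_mul, eval_pow, eval_X, eval_C, Real.sq_sqrt hd, d]
  ring

theorem exists_dvd_isSumTwoSq_of_forall_eval_nonneg {p : ℝ[X]} (hp : ∀ x, 0 ≤ p.eval x)
    (hdeg : 0 < p.natDegree) : ∃ g : ℝ[X], g ∣ p ∧ 0 < g.natDegree ∧ IsSumTwoSq g := by
  by_cases hroot : ∃ a, p.IsRoot a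
  · obtain ⟨a, ha⟩ := hroot
    refine ⟨(X - C a) ^ 2, sq_X_sub_C_dvd_of_isRoot hp ha, ?_, isSumTwoSq_sq _⟩
    simp [natDegree_pow]
  obtain ⟨g, hgm, hgi, hgp⟩ :=
    exists_monic_irreducible_factor p (not_isUnit_of_natDegree_pos p hdeg)
  have hgroot : ∀ x, ¬ g.IsRoot x := fun x hx => hroot ⟨x, hx.dvd hgp⟩
  have hg2 : g.natDegree = 2 := by
    have hg1 : g.natDegree ≠ 1 := fun h =>
      let ⟨x, hx⟩ :=
        exists_root_of_degree_eq_one ((degree_eq_iff_natDegree_eq hgm.ne_zero).mpr h)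
      hgroot x hx
    have := hgi.natDegree_pos
    have := hgi.natDegree_le_two
    omega
  exact ⟨g, hgp, hg2 ▸ two_pos, isSumTwoSq_of_isMonicOfDegree_two ⟨hg2, hgm⟩ hgroot⟩

end Polynomial

/-- A real polynomial that is nonnegative on all of `ℝ` is a sum of two squares. -/
theorem exists_sq_add_sq_of_nonneg (p : Polynomial ℝ)
    (hp : ∀ x : ℝ, 0 ≤ p.eval x) :
    ∃ q r : Polynomial ℝ, p = q ^ 2 + r ^ 2 := by
  induction hn : p.natDegree using Nat.strong_induction_on generalizing p with
  | _ n ih =>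
  rcases Nat.eq_zero_or_pos n with rfl | hpos
  · rw [eq_C_of_natDegree_eq_zero hn] at hp ⊢
    exact ⟨C √(p.coeff 0), 0, by rw [← C_pow, Real.sq_sqrt (by simpa using hp 0)]; ring⟩
  obtain ⟨g, ⟨f, rfl⟩, hg, hgsq⟩ :=
    exists_dvd_isSumTwoSq_of_forall_eval_nonneg hp (hn ▸ hpos)
  have hg0 : g ≠ 0 := ne_zero_of_natDegree_gt hg
  have hf0 : f ≠ 0 := by rintro rfl; simp at hn; omega
  have hf : ∀ x, 0 ≤ f.eval x := forall_eval_nonneg_of_mul hg0 hgsq.eval_nonneg hp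
  have hdeg : f.natDegree < n := by rw [← hn, natDegree_mul hg0 hf0]; omega
  exact hgsq.mul (ih f.natDegree hdeg f hf rfl)
end

section
/- A polynomial p with real coefficients that is nonnegative on the negative half-line (-∞, 0] can be written in the form p(x) = q(x)^2 + r(x)^2 - x*(s(x)^2 + t(x)^2) for some real polynomials q, r, s, t. -/
/-!
Substituting `x = -y²` turns `p` into a polynomial `P(y) = p(-y²)` that is nonnegative on all of
`ℝ`, hence a sum of two squares `A² + B²`: every complex root `z` of `P` yields the factor
`(X - re z)² + (im z)²` (for a real root this is a double root, as `P` has a minimum there), and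
sums of two squares are closed under products. Splitting `A(y) = a(y²) + y b(y²)` and
`B(y) = c(y²) + y d(y²)` into even and odd parts and using that `P` is even gives
`P(y) = a(y²)² + c(y²)² + y² (b(y²)² + d(y²)²)`, which is the claim after substituting back.
-/

open Polynomial

namespace Polynomial

theorem isRoot_derivative_of_isLocalMin {p : ℝ[X]} {r : ℝ}
    (h : IsLocalMin (fun x => p.eval x) r) : p.derivative.IsRoot r := by
  simpa [IsRoot, Polynomial.deriv] using h.deriv_eq_zero

theorem sq_X_sub_C_dvd_of_isRoot_of_nonneg {p : ℝ[X]} (hp : ∀ x, 0 ≤ p.eval x) {r : ℝ}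
    (hr : p.IsRoot r) : (X - C r) ^ 2 ∣ p := by
  rcases eq_or_ne p 0 with rfl | hp0
  · exact dvd_zero _
  have hmin : IsLocalMin (fun x => p.eval x) r :=
    Filter.Eventually.of_forall fun x => by simpa [hr.eq_zero] using hp x
  have hmult : 1 < p.rootMultiplicity r :=
    (one_lt_rootMultiplicity_iff_isRoot hp0).2 ⟨hr, isRoot_derivative_of_isLocalMin hmin⟩
  exact (pow_dvd_pow _ hmult).trans (pow_rootMultiplicity_dvd p r)

theorem sq_X_sub_C_add_C_sq_dvd_of_aeval_eq_zero {p : ℝ[X]} (hp : ∀ x, 0 ≤ p.eval x) {z : ℂ}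
    (hz : aeval z p = 0) : (X - C z.re) ^ 2 + C z.im ^ 2 ∣ p := by
  by_cases him : z.im = 0
  · rw [him, C_0, zero_pow two_ne_zero, add_zero]
    refine sq_X_sub_C_dvd_of_isRoot_of_nonneg hp ?_
    rw [show z = z.re from Complex.ext rfl (by simp [him])] at hz
    simpa [← Complex.coe_algebraMap, aeval_algebraMap_apply] using hz
  · convert p.quadratic_dvd_of_aeval_eq_zero_im_ne_zero hz him using 1
    rw [Complex.sq_norm, Complex.normSq_apply]
    simp only [map_add, map_mul, map_ofNat]
    ring

theorem eval_nonneg_of_eval_mul_nonneg {q h : ℝ[X]} (hq0 : q ≠ 0) (hq : ∀ x, 0 ≤ q.eval x)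
    (hqh : ∀ x, 0 ≤ (q * h).eval x) (x : ℝ) : 0 ≤ h.eval x := by
  have hdense : Dense {x | q.IsRoot x}ᶜ :=
    (finite_setOfPred_isRoot hq0).countable.dense_compl ℝ
  have hsub : {x | q.IsRoot x}ᶜ ⊆ {x | 0 ≤ h.eval x} := fun y hy => by
    have hqy : 0 < q.eval y := (hq y).lt_of_ne' hy
    exact nonneg_of_mul_nonneg_right (by simpa using hqh y) hqy
  exact (isClosed_le continuous_const h.continuous).closure_subset_iff.2 hsub
    (hdense.closure_eq ▸ Set.mem_univ x)

theorem exists_eq_sq_add_sq_of_nonneg {p : ℝ[X]} (hp : ∀ x, 0 ≤ p.eval x) :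
    ∃ a b : ℝ[X], p = a ^ 2 + b ^ 2 := by
  induction hn : p.natDegree using Nat.strong_induction_on generalizing p with
  | _ n ih =>
    rcases eq_or_ne n 0 with rfl | hn0
    · obtain ⟨c, rfl⟩ := natDegree_eq_zero.1 hn
      have hc : 0 ≤ c := by simpa using hp 0
      exact ⟨C √c, 0, by rw [← C_pow, Real.sq_sqrt hc, zero_pow two_ne_zero, add_zero]⟩
    obtain ⟨z, hz⟩ := IsAlgClosed.exists_aeval_eq_zero ℂ p
      (natDegree_pos_iff_degree_pos.1 (hn ▸ Nat.pos_of_ne_zero hn0)).ne'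
    obtain ⟨h, rfl⟩ := sq_X_sub_C_add_C_sq_dvd_of_aeval_eq_zero hp hz
    set q := (X - C z.re) ^ 2 + C z.im ^ 2
    have hq : ∀ x, 0 ≤ q.eval x := fun x => by
      simp only [q, eval_add, eval_pow, eval_C, eval_sub, eval_X]
      positivity
    have hq2 : q.natDegree = 2 := by simp only [q]; compute_degree!
    have hq0 : q ≠ 0 := ne_zero_of_natDegree_gt (hq2 ▸ two_pos)
    have hh0 : h ≠ 0 := by
      rintro rfl
      exact hn0 (by rw [← hn, mul_zero, natDegree_zero])
    have hdeg : n = 2 + h.natDegree := by rw [← hn, natDegree_mul hq0 hh0, hq2]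
    obtain ⟨a, b, rfl⟩ := ih _ (by omega) (eval_nonneg_of_eval_mul_nonneg hq0 hq hp) rfl
    exact ⟨_, _, sq_add_sq_mul_sq_add_sq⟩

theorem exists_eq_expand_two_add_X_mul_expand_two {R : Type*} [CommSemiring R] (f : R[X]) :
    ∃ a b : R[X], f = expand R 2 a + X * expand R 2 b := by
  induction f using Polynomial.induction_on' with
  | add f g hf hg =>
    obtain ⟨a, b, rfl⟩ := hf
    obtain ⟨c, d, rfl⟩ := hg
    exact ⟨a + c, b + d, by simp only [map_add]; ring⟩
  | monomial n r =>
    obtain ⟨m, rfl | rfl⟩ := Nat.even_or_odd' n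
    · exact ⟨monomial m r, 0, by rw [expand_monomial, map_zero, mul_zero, add_zero, mul_comm]⟩
    · refine ⟨0, monomial m r, ?_⟩
      rw [expand_monomial, map_zero, zero_add, X_mul_monomial, mul_comm]

theorem expand_two_comp_neg_X {R : Type*} [CommRing R] (f : R[X]) :
    (expand R 2 f).comp (-X) = expand R 2 f := by
  rw [expand_eq_comp_X_pow, comp_assoc, pow_comp, X_comp, neg_sq]

theorem exists_eq_sq_add_sq_add_X_mul_of_nonneg {p : ℝ[X]} (hp : ∀ x, 0 ≤ x → 0 ≤ p.eval x) :
    ∃ a b c d : ℝ[X], p = a ^ 2 + b ^ 2 + X * (c ^ 2 + d ^ 2) := by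
  obtain ⟨A, B, hAB⟩ := exists_eq_sq_add_sq_of_nonneg (p := expand ℝ 2 p) fun x => by
    simpa using hp (x ^ 2) (sq_nonneg x)
  obtain ⟨a, b, rfl⟩ := exists_eq_expand_two_add_X_mul_expand_two A
  obtain ⟨c, d, rfl⟩ := exists_eq_expand_two_add_X_mul_expand_two B
  -- `expand ℝ 2 p` is even: averaging `hAB` with its reflection `y ↦ -y` cancels the cross terms.
  have hneg := congrArg (·.comp (-X)) hAB
  simp only [add_comp, mul_comp, pow_comp, X_comp, expand_two_comp_neg_X] at hneg
  refine ⟨a, c, b, d, expand_injective two_pos (mul_left_cancel₀ (two_ne_zero' ℝ[X]) ?_)⟩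
  simp only [map_add, map_mul, map_pow, expand_X]
  linear_combination hAB + hneg

end Polynomial

/-- Pólya–Szegő representation on the negative half-line: a real polynomial that is
nonnegative on `(-∞, 0]` can be written as `p = q^2 + r^2 - X (s^2 + t^2)`. -/
theorem exists_polya_szego_of_nonneg_on_neg (p : Polynomial ℝ)
    (hp : ∀ x : ℝ, x ≤ 0 → 0 ≤ p.eval x) :
    ∃ q r s t : Polynomial ℝ,
      p = q ^ 2 + r ^ 2 - Polynomial.X * (s ^ 2 + t ^ 2) := by
  obtain ⟨a, b, c, d, h⟩ := exists_eq_sq_add_sq_add_X_mul_of_nonneg (p := p.comp (-X))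
    fun x hx => by simpa using hp (-x) (neg_nonpos.2 hx)
  refine ⟨a.comp (-X), b.comp (-X), c.comp (-X), d.comp (-X), ?_⟩
  have h' := congrArg (·.comp (-X)) h
  simp only [comp_assoc, neg_comp, X_comp, neg_neg, comp_X, add_comp, mul_comp, pow_comp] at h'
  rw [h']
  ring
end

section
/- Let ρ, σ be commuting full-rank density matrices diagonal in a common basis with eigenvalue vectors r, s, and let ρ', σ' be obtained by applying a common row-stochastic matrix T to the eigenvalue vectors: r' = r T, s' = s T. If x F(x) is concave on [0,1], then with s_min the smallest eigenvalue of σ, one has ∑_i r'_i F(ln(s_min r'_i/s'_i)) ≥ ∑_i r_i F(ln(s_min r_i/s_i)). -/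
/-!
With `g x = x * F (log x)`, the quantity `s_min * E_{s_min}(r‖s)` is the perspective sum
`∑ i, s i * g (s_min * r i / s i)`. Applying Jensen's inequality for the concave `g` to each column
of `T`, with weights `s i * T i j`, shows that such perspective sums can only grow when `r` and `s`
are both pushed through `T`. The factor `s_min` keeps every argument of `g` inside `[0, 1]`.
-/

open Finset Matrix

theorem ConcaveOn.sum_mul_le_sum_mul_map_centerMass {ι : Type*} {s : Set ℝ} {g : ℝ → ℝ}
    (hg : ConcaveOn ℝ s g) {t : Finset ι} {w x : ι → ℝ} (hw : ∀ i ∈ t, 0 ≤ w i)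
    (hx : ∀ i ∈ t, x i ∈ s) :
    ∑ i ∈ t, w i * g (x i) ≤ (∑ i ∈ t, w i) * g (t.centerMass w x) := by
  rcases (sum_nonneg hw).eq_or_lt with hW | hW
  · rw [← hW, zero_mul]
    have hw0 : ∀ i ∈ t, w i = 0 := (sum_eq_zero_iff_of_nonneg hw).mp hW.symm
    exact (sum_eq_zero fun i hi => by rw [hw0 i hi, zero_mul]).le
  · have hJensen := hg.le_map_centerMass hw hW hx
    rw [centerMass, smul_eq_mul, inv_mul_le_iff₀ hW] at hJensen
    simpa only [smul_eq_mul, Function.comp] using hJensen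

theorem ConcaveOn.sum_mul_div_le_vecMul {ι κ : Type*} [Fintype ι] [Fintype κ] {s : Set ℝ}
    {g : ℝ → ℝ} (hg : ConcaveOn ℝ s g) {p q : ι → ℝ} {T : Matrix ι κ ℝ}
    (hq : ∀ i, 0 < q i) (hT0 : ∀ i j, 0 ≤ T i j) (hT1 : ∀ i, ∑ j, T i j = 1)
    (hmem : ∀ i, p i / q i ∈ s) :
    ∑ i, q i * g (p i / q i) ≤ ∑ j, vecMul q T j * g (vecMul p T j / vecMul q T j) := by
  have hcenter : ∀ j, univ.centerMass (fun i => q i * T i j) (fun i => p i / q i)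
      = vecMul p T j / vecMul q T j := fun j => by
    simp only [centerMass, vecMul, dotProduct, smul_eq_mul]
    rw [inv_mul_eq_div]
    congr 1
    exact sum_congr rfl fun i _ => by field_simp [(hq i).ne']
  calc ∑ i, q i * g (p i / q i)
      = ∑ j, ∑ i, q i * T i j * g (p i / q i) := by
        rw [sum_comm]
        exact sum_congr rfl fun i _ => by rw [← sum_mul, ← mul_sum, hT1, mul_one]
    _ ≤ ∑ j, vecMul q T j * g (vecMul p T j / vecMul q T j) := sum_le_sum fun j _ => by
        rw [← hcenter]
        exact hg.sum_mul_le_sum_mul_map_centerMass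
          (fun i _ => mul_nonneg (hq i).le (hT0 i j)) fun i _ => hmem i

theorem relative_monotone_classical_general {d : ℕ} (r s r' s' : Fin d → ℝ)
    (hr0 : ∀ i, 0 ≤ r i) (hr1 : ∑ i, r i = 1)
    (hs0 : ∀ i, 0 < s i)
    (hs'0 : ∀ i, 0 < s' i)
    (T : Matrix (Fin d) (Fin d) ℝ)
    (hT0 : ∀ i j, 0 ≤ T i j) (hTrow : ∀ i, ∑ j, T i j = 1)
    (hrT : r' = Matrix.vecMul r T) (hsT : s' = Matrix.vecMul s T)
    (F : ℝ → ℝ) (hF : ConcaveOn ℝ (Set.Icc (0:ℝ) 1) (fun x : ℝ => x * F (Real.log x)))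
    (smin : ℝ) (hsminLe : ∀ i, smin ≤ s i) (hsminMem : ∃ i, smin = s i) :
    ∑ i, r' i * F (Real.log (smin * r' i / s' i))
      ≥ ∑ i, r i * F (Real.log (smin * r i / s i)) := by
  obtain ⟨i₀, rfl⟩ := hsminMem
  have hsmin := hs0 i₀
  have hmem : ∀ i, (s i₀ • r) i / s i ∈ Set.Icc (0 : ℝ) 1 := fun i => by
    have hri : r i ≤ 1 := hr1 ▸ single_le_sum (fun j _ => hr0 j) (mem_univ i)
    rw [Pi.smul_apply, smul_eq_mul, Set.mem_Icc, div_le_one (hs0 i)]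
    exact ⟨div_nonneg (mul_nonneg hsmin.le (hr0 i)) (hs0 i).le,
      (mul_le_of_le_one_right hsmin.le hri).trans (hsminLe i)⟩
  have hperspective : ∀ p q : Fin d → ℝ, (∀ i, 0 < q i) →
      ∑ i, q i * ((s i₀ • p) i / q i * F (Real.log ((s i₀ • p) i / q i)))
        = s i₀ * ∑ i, p i * F (Real.log (s i₀ * p i / q i)) := fun p q hq => by
    rw [mul_sum]
    exact sum_congr rfl fun i _ => by simp only [Pi.smul_apply, smul_eq_mul]; field_simp [(hq i).ne']
  have hDPI := hF.sum_mul_div_le_vecMul hs0 hT0 hTrow hmem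
  rw [smul_vecMul, ← hrT, ← hsT, hperspective r s hs0, hperspective r' s' hs'0] at hDPI
  exact le_of_mul_le_mul_left hDPI hsmin

/-- Classical relative monotone theorem: if the pairs of eigenvalue vectors `(r, s)` and
`(r', s')` are related by a common row-stochastic matrix `T` (`r' = r T`, `s' = s T`),
and `x ↦ x F(ln x)` is concave on `[0,1]`, then with `s_min` the smallest entry of `s`,
`∑ i, r'_i F(ln (s_min r'_i / s'_i)) ≥ ∑ i, r_i F(ln (s_min r_i / s_i))`. -/
theorem relative_monotone_classical {d : ℕ} (r s r' s' : Fin d → ℝ)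
    (hr0 : ∀ i, 0 ≤ r i) (hr1 : ∑ i, r i = 1)
    (hs0 : ∀ i, 0 < s i) (hs1 : ∑ i, s i = 1)
    (hr'0 : ∀ i, 0 ≤ r' i) (hr'1 : ∑ i, r' i = 1)
    (hs'0 : ∀ i, 0 < s' i) (hs'1 : ∑ i, s' i = 1)
    (T : Matrix (Fin d) (Fin d) ℝ)
    (hT0 : ∀ i j, 0 ≤ T i j) (hTrow : ∀ i, ∑ j, T i j = 1)
    (hrT : r' = Matrix.vecMul r T) (hsT : s' = Matrix.vecMul s T)
    (F : ℝ → ℝ) (hF : ConcaveOn ℝ (Set.Icc (0:ℝ) 1) (fun x : ℝ => x * F (Real.log x)))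
    (smin : ℝ) (hsminLe : ∀ i, smin ≤ s i) (hsminMem : ∃ i, smin = s i) :
    ∑ i, r' i * F (Real.log (smin * r' i / s' i))
      ≥ ∑ i, r i * F (Real.log (smin * r i / s i)) :=
  relative_monotone_classical_general r s r' s' hr0 hr1 hs0 hs'0 T hT0 hTrow hrT hsT F hF smin
    hsminLe hsminMem
end

section
/- Second-order Landauer inequality: under the same majorization ω ≻ υ as in the Landauer setup, one has (n ln 2 + 1)^2 ≥ (S(r) + 1)^2 + C(r), where C(r) is the varentropy of r. -/
/-- `l` majorizes `m`: for each `k`, the sum of the `k` largest entries of `m` is at most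
the sum of the `k` largest entries of `l` (phrased via subsets of each cardinality). -/
def Majorizes {ι : Type*} [Fintype ι] (l m : ι → ℝ) : Prop :=
  ∀ A : Finset ι, ∃ B : Finset ι, B.card = A.card ∧ ∑ i ∈ A, m i ≤ ∑ i ∈ B, l i

/-- Shannon entropy in nats. -/
noncomputable def entropy {d : ℕ} (ν : Fin d → ℝ) : ℝ :=
  -∑ i, ν i * Real.log (ν i)

/-- Varentropy (variance of the modular Hamiltonian `-ln ν`). -/
noncomputable def varentropy {d : ℕ} (ν : Fin d → ℝ) : ℝ :=
  (∑ i, ν i * (Real.log (ν i)) ^ 2) - (entropy ν) ^ 2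

/-! The map `x ↦ x (1 - ln x)²` is concave on `(0, 1]`, so by Jensen the sum `∑ rᵢ (1 - ln rᵢ)²`,
which expands to `(S(r) + 1)² + C(r)`, is at most its value `(1 + ln d)²` at the uniform distribution
on the `d` points of the support. Since `ω ≻ υ` and `υ` puts all its mass on `2ⁿ` points, the support
of `ω` (which has `d` points) fits into a set of `2ⁿ` points, so `ln d ≤ n ln 2`. -/

open Finset Real

theorem Majorizes.card_support_le {ι : Type*} [Fintype ι] [DecidableEq ι] {l m : ι → ℝ}
    (h : Majorizes l m) (hl : ∀ i, 0 ≤ l i)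
    {A : Finset ι} (hA : ∑ i, l i ≤ ∑ i ∈ A, m i) : #{i | l i ≠ 0} ≤ #A := by
  obtain ⟨B, hBcard, hB⟩ := h A
  have hzero : ∑ i ∈ univ \ B, l i = 0 := by
    have := sum_sdiff (f := l) (subset_univ B)
    have := sum_nonneg fun i (_ : i ∈ univ \ B) => hl i
    linarith
  have hsupp : ({i | l i ≠ 0} : Finset ι) ⊆ B := by
    intro i hi
    by_contra hiB
    exact (mem_filter.mp hi).2 <|
      (sum_eq_zero_iff_of_nonneg fun j _ => hl j).mp hzero i (by simp [hiB])
  exact hBcard ▸ card_le_card hsupp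

noncomputable def oneSubLogSqMul (x : ℝ) : ℝ := x * (1 - log x) ^ 2

theorem hasDerivAt_oneSubLogSqMul {x : ℝ} (hx : 0 < x) :
    HasDerivAt oneSubLogSqMul (log x ^ 2 - 1) x := by
  have h := (hasDerivAt_id' x).mul (((hasDerivAt_log hx.ne').const_sub 1).pow 2)
  refine h.congr_deriv ?_
  simp only [Pi.pow_apply]
  field_simp
  ring

theorem concaveOn_oneSubLogSqMul : ConcaveOn ℝ (Set.Ioc 0 1) oneSubLogSqMul := by
  refine concaveOn_of_hasDerivWithinAt2_nonpos (f' := fun x => log x ^ 2 - 1)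
    (f'' := fun x => 2 * log x / x) (convex_Ioc 0 1) ?_ ?_ ?_ ?_
  · intro x hx
    exact (hasDerivAt_oneSubLogSqMul hx.1).continuousAt.continuousWithinAt
  all_goals rw [interior_Ioc]
  · intro x hx
    exact (hasDerivAt_oneSubLogSqMul hx.1).hasDerivWithinAt
  · intro x hx
    have h := ((hasDerivAt_log hx.1.ne').pow 2).sub_const 1
    refine (h.congr_deriv ?_).hasDerivWithinAt
    simp [div_eq_mul_inv]
  · intro x hx
    have hlog : log x ≤ 0 := log_nonpos hx.1.le hx.2.le
    exact div_nonpos_of_nonpos_of_nonneg (by linarith) hx.1.le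

theorem sum_oneSubLogSqMul_eq {d : ℕ} (r : Fin d → ℝ) (hr1 : ∑ i, r i = 1) :
    ∑ i, oneSubLogSqMul (r i) = (entropy r + 1) ^ 2 + varentropy r := by
  have hexpand : ∀ i, oneSubLogSqMul (r i)
      = r i - 2 * (r i * log (r i)) + r i * log (r i) ^ 2 := fun i => by
    unfold oneSubLogSqMul; ring
  simp only [hexpand, sum_add_distrib, sum_sub_distrib, ← mul_sum, hr1, varentropy, entropy]
  ring

theorem sum_oneSubLogSqMul_le {ι : Type*} [Fintype ι] (r : ι → ℝ) (hr0 : ∀ i, 0 < r i)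
    (hr1 : ∑ i, r i = 1) : ∑ i, oneSubLogSqMul (r i) ≤ (1 + log (Fintype.card ι)) ^ 2 := by
  have hcard : (0 : ℝ) < Fintype.card ι := by
    have : Nonempty ι := by
      by_contra h
      simp [not_nonempty_iff.mp h] at hr1
    exact_mod_cast Fintype.card_pos
  set c : ℝ := (Fintype.card ι : ℝ)
  have hr_le : ∀ i, r i ≤ 1 := fun i =>
    hr1 ▸ single_le_sum (fun j _ => (hr0 j).le) (mem_univ i)
  have hjensen := concaveOn_oneSubLogSqMul.le_map_sum (t := univ) (w := fun _ => c⁻¹) (p := r)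
    (fun _ _ => by positivity)
    (by rw [sum_const, card_univ, nsmul_eq_mul]; exact mul_inv_cancel₀ hcard.ne')
    fun i _ => ⟨hr0 i, hr_le i⟩
  have huniform : oneSubLogSqMul c⁻¹ = c⁻¹ * (1 + log c) ^ 2 := by
    rw [oneSubLogSqMul, log_inv]
    ring
  simp only [smul_eq_mul, ← mul_sum, hr1, mul_one, huniform] at hjensen
  exact (mul_le_mul_iff_of_pos_left (inv_pos.mpr hcard)).mp hjensen

/-- Second-order Landauer inequality: under the erasure majorization `ω ≻ υ`,
`(n ln 2 + 1)^2 ≥ (S(r) + 1)^2 + C(r)`. -/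
theorem landauer_second_order {d n : ℕ} (r : Fin d → ℝ)
    (hr0 : ∀ i, 0 < r i) (hr1 : ∑ i, r i = 1)
    (i0 : Fin (2 ^ n)) (j0 : Fin d)
    (hmaj : Majorizes
      (fun ij : Fin d × Fin (2 ^ n) => if ij.2 = i0 then r ij.1 else 0)
      (fun ij : Fin d × Fin (2 ^ n) => if ij.1 = j0 then (1 : ℝ) / 2 ^ n else 0)) :
    ((n : ℝ) * Real.log 2 + 1) ^ 2 ≥ (entropy r + 1) ^ 2 + varentropy r := by
  have hd : 0 < d := Nat.pos_of_ne_zero fun h => by subst h; simp at hr1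
  have hsupport := hmaj.card_support_le (A := {j0} ×ˢ univ)
    (fun ij => by split_ifs <;> simp [(hr0 _).le])
    (by simp [Fintype.sum_prod_type, hr1])
  have hd_le : d ≤ 2 ^ n := by
    refine le_trans ?_ (by simpa using hsupport)
    simpa using card_le_card_of_injOn (s := univ) (fun j : Fin d => (j, i0))
      (fun j _ => by simp [(hr0 j).ne']) (fun a _ b _ h => (Prod.ext_iff.mp h).1)
  have hlog_d : log d ≤ n * log 2 := by
    rw [← log_pow]
    exact log_le_log (by exact_mod_cast hd) (by exact_mod_cast hd_le)
  have hlog_d_nonneg : 0 ≤ log d := log_nonneg (by exact_mod_cast hd)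
  calc (entropy r + 1) ^ 2 + varentropy r = ∑ i, oneSubLogSqMul (r i) :=
        (sum_oneSubLogSqMul_eq r hr1).symm
    _ ≤ (1 + log d) ^ 2 := by simpa using sum_oneSubLogSqMul_le r hr0 hr1
    _ ≤ (n * log 2 + 1) ^ 2 := by nlinarith
end
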